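/- The moment generating function of the NDOPPE distribution: for t < −ln(1−θ), E[e^{tX}] = (Σ_{k=0}^r a_k k!/(1−(1−θ)e^t)^{k+1}) / (Σ_{k=0}^r a_k k!/θ^{k+1}). -/

import Mathlib

open Finset

/-- The polynomial part p(x) = ∑_{k=0}^r a_k · k! · C(x+k, x) of the NDOPPE pmf. -/
noncomputable def ndoppeP (a : ℕ → ℝ) (r : ℕ) (x : ℕ) : ℝ :=
  ∑ k ∈ Finset.range (r + 1), a k * (Nat.factorial k) * ((x + k).choose x)

/-- The normalizing constant h(θ) = (∑_{k=0}^r a_k · k! / θ^{k+1})⁻¹. -/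
noncomputable def ndoppeH (θ : ℝ) (a : ℕ → ℝ) (r : ℕ) : ℝ :=
  (∑ k ∈ Finset.range (r + 1), a k * (Nat.factorial k) / θ ^ (k + 1))⁻¹

/-- The NDOPPE pmf p(x;θ) = h(θ)·p(x)·(1−θ)^x. -/
noncomputable def ndoppePMF (θ : ℝ) (a : ℕ → ℝ) (r : ℕ) (x : ℕ) : ℝ :=
  ndoppeH θ a r * ndoppeP a r x * (1 - θ) ^ x

/-!
Writing `q = (1 - θ) eᵗ`, the weighted pmf `e^{tx} p(x; θ)` is `h(θ)` times a finite combination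
of the negative binomial series `∑ₓ C(x+k, k) qˣ = (1 - q)^{-(k+1)}`, which converge because
`t < -log (1 - θ)` forces `|q| < 1`.
-/

lemma abs_mul_exp_lt_one_of_lt_neg_log {c t : ℝ} (ht : t < -Real.log c) :
    |c * Real.exp t| < 1 := by
  rcases eq_or_ne c 0 with rfl | hc
  · simp
  have hexp : Real.exp t < |c|⁻¹ := by
    have := Real.exp_lt_exp.2 ht
    rwa [Real.exp_neg, ← Real.log_abs, Real.exp_log (abs_pos.2 hc)] at this
  rw [abs_mul, Real.abs_exp]
  calc |c| * Real.exp t < |c| * |c|⁻¹ := by gcongr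
    _ = 1 := mul_inv_cancel₀ (abs_ne_zero.2 hc)

lemma hasSum_sum_mul_choose_mul_geometric {𝕜 : Type*} [NormedDivisionRing 𝕜]
    (s : Finset ℕ) (c : ℕ → 𝕜) {q : 𝕜} (hq : ‖q‖ < 1) :
    HasSum (fun x : ℕ ↦ (∑ k ∈ s, c k * (x + k).choose k) * q ^ x)
      (∑ k ∈ s, c k / (1 - q) ^ (k + 1)) := by
  simp only [Finset.sum_mul, mul_assoc, div_eq_mul_one_div (c _)]
  exact hasSum_sum fun k _ ↦ (hasSum_choose_mul_geometric_of_norm_lt_one k hq).mul_left (c k)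

lemma exp_mul_ndoppePMF (θ : ℝ) (a : ℕ → ℝ) (r : ℕ) (t : ℝ) (x : ℕ) :
    Real.exp (t * x) * ndoppePMF θ a r x = ndoppeH θ a r *
      ((∑ k ∈ range (r + 1), a k * k.factorial * (x + k).choose k) * ((1 - θ) * Real.exp t) ^ x) := by
  have hsymm : ndoppeP a r x = ∑ k ∈ range (r + 1), a k * k.factorial * (x + k).choose k :=
    sum_congr rfl fun k _ ↦ by rw [Nat.choose_symm_add]
  rw [ndoppePMF, hsymm, mul_pow, ← Real.exp_nat_mul, mul_comm t]
  ring

theorem ndoppe_mgf_general (θ : ℝ) (a : ℕ → ℝ) (r : ℕ) (t : ℝ)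
    (ht : t < -Real.log (1 - θ)) :
    ∑' x : ℕ, Real.exp (t * x) * ndoppePMF θ a r x =
      (∑ k ∈ Finset.range (r + 1),
          a k * (Nat.factorial k) / (1 - (1 - θ) * Real.exp t) ^ (k + 1)) /
        (∑ k ∈ Finset.range (r + 1), a k * (Nat.factorial k) / θ ^ (k + 1)) := by
  have hq : ‖(1 - θ) * Real.exp t‖ < 1 := abs_mul_exp_lt_one_of_lt_neg_log ht
  simp_rw [exp_mul_ndoppePMF, tsum_mul_left]
  rw [(hasSum_sum_mul_choose_mul_geometric _ (fun k ↦ a k * k.factorial) hq).tsum_eq, ndoppeH,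
    div_eq_inv_mul]

theorem ndoppe_mgf (θ : ℝ) (a : ℕ → ℝ) (r : ℕ) (t : ℝ)
    (hθ0 : 0 < θ) (hθ1 : θ < 1) (ha : ∀ k, 0 ≤ a k)
    (hpos : ∃ k ≤ r, 0 < a k) (ht : t < -Real.log (1 - θ)) :
    ∑' x : ℕ, Real.exp (t * x) * ndoppePMF θ a r x =
      (∑ k ∈ Finset.range (r + 1),
          a k * (Nat.factorial k) / (1 - (1 - θ) * Real.exp t) ^ (k + 1)) /
        (∑ k ∈ Finset.range (r + 1), a k * (Nat.factorial k) / θ ^ (k + 1)) :=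
  ndoppe_mgf_general θ a r t ht
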